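/- arXiv:2404.19537 — 2 statements merged into one kernel-verified Lean document; each statement's English description precedes it below -/
import Mathlib

section
/- Let G₁ be r₁-regular (r₁ ≥ 2) with p₁ vertices and q₁ edges, and G₂ be r₂-regular with p₂ vertices. Then the ε-Wiener index of the subdivision-vertex join satisfies W_ε(G₁ ∨̇ G₂) = q₁(3p₁ − 4r₁ + 2q₁ − 1) + p₂(p₂ + 2q₁ − r₂ − 1) − (3/2) r₁ p₁. -/
open SimpleGraph Matrix Finset

attribute [local instance] Fintype.ofFinite Classical.propDecidable

noncomputable section

/-- Eccentricity of a vertex: maximum distance to any vertex. -/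
def ecc {V : Type*} [Fintype V] (G : SimpleGraph V) (v : V) : ℕ :=
  Finset.univ.sup (fun w => G.dist v w)

/-- Diameter: maximum eccentricity. -/
def gdiam {V : Type*} [Fintype V] (G : SimpleGraph V) : ℕ :=
  Finset.univ.sup (fun v => ecc G v)

/-- The eccentricity matrix. -/
def eccMatrix {V : Type*} [Fintype V] (G : SimpleGraph V) : Matrix V V ℝ :=
  fun u v => if G.dist u v = min (ecc G u) (ecc G v) then (G.dist u v : ℝ) else 0

/-- Join of two graphs. -/
def joinGraph {V₁ V₂ : Type*} (G₁ : SimpleGraph V₁) (G₂ : SimpleGraph V₂) :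
    SimpleGraph (V₁ ⊕ V₂) :=
  SimpleGraph.fromRel (fun x y =>
    match x, y with
    | Sum.inl a, Sum.inl b => G₁.Adj a b
    | Sum.inr a, Sum.inr b => G₂.Adj a b
    | Sum.inl _, Sum.inr _ => True
    | Sum.inr _, Sum.inl _ => False)

/-- Disjoint union of two graphs. -/
def disjUnion {V₁ V₂ : Type*} (G₁ : SimpleGraph V₁) (G₂ : SimpleGraph V₂) :
    SimpleGraph (V₁ ⊕ V₂) :=
  SimpleGraph.fromRel (fun x y =>
    match x, y with
    | Sum.inl a, Sum.inl b => G₁.Adj a b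
    | Sum.inr a, Sum.inr b => G₂.Adj a b
    | _, _ => False)

/-- Subdivision-vertex join `G₁ ∨̇ G₂`: take the subdivision of `G₁` (original vertices
`V₁`, one new vertex for every edge) and join every original vertex of `G₁` to every
vertex of `G₂`. -/
def subVertexJoin {V₁ V₂ : Type*} (G₁ : SimpleGraph V₁) (G₂ : SimpleGraph V₂) :
    SimpleGraph ((V₁ ⊕ G₁.edgeSet) ⊕ V₂) :=
  SimpleGraph.fromRel (fun x y =>
    match x, y with
    | Sum.inl (Sum.inl v), Sum.inl (Sum.inr e) => v ∈ (e : Sym2 V₁)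
    | Sum.inl (Sum.inl _), Sum.inr _ => True
    | Sum.inr a, Sum.inr b => G₂.Adj a b
    | _, _ => False)

/-- Subdivision-edge join `G₁ ⊻ G₂`: take the subdivision of `G₁` and join every
subdivision (inserted) vertex of `G₁` to every vertex of `G₂`. -/
def subEdgeJoin {V₁ V₂ : Type*} (G₁ : SimpleGraph V₁) (G₂ : SimpleGraph V₂) :
    SimpleGraph ((V₁ ⊕ G₁.edgeSet) ⊕ V₂) :=
  SimpleGraph.fromRel (fun x y =>
    match x, y with
    | Sum.inl (Sum.inl v), Sum.inl (Sum.inr e) => v ∈ (e : Sym2 V₁)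
    | Sum.inl (Sum.inr _), Sum.inr _ => True
    | Sum.inr a, Sum.inr b => G₂.Adj a b
    | _, _ => False)

/-- Line graph: vertices are edges of `G`, adjacent iff they share an endpoint. -/
def lineG {V : Type*} (G : SimpleGraph V) : SimpleGraph G.edgeSet :=
  SimpleGraph.fromRel (fun e f => ∃ v, v ∈ (e : Sym2 V) ∧ v ∈ (f : Sym2 V))

/-- Incidence matrix of a graph. -/
def incMat {V : Type*} [Fintype V] (G : SimpleGraph V) : Matrix V G.edgeSet ℝ :=
  fun v e => if v ∈ (e : Sym2 V) then 1 else 0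

/-- All-ones matrix. -/
def Jmat (m n : Type*) : Matrix m n ℝ := Matrix.of (fun _ _ => (1 : ℝ))

/-- A symmetric matrix is irreducible iff it is not permutation-similar to a
nontrivial block upper-triangular matrix, i.e. there is no nontrivial vertex split
with all cross entries zero. -/
def MatIrreducible {n : Type*} (M : Matrix n n ℝ) : Prop :=
  ∀ S : Set n, S.Nonempty → Sᶜ.Nonempty → ∃ u ∈ S, ∃ v ∈ Sᶜ, M u v ≠ 0

/-- `μ` is an eigenvalue of `M`. -/
def IsEigenvalue {n : Type*} [Fintype n] (M : Matrix n n ℝ) (μ : ℝ) : Prop :=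
  ∃ v : n → ℝ, v ≠ 0 ∧ M.mulVec v = μ • v

/-- Eigenspace of `M` for `μ`. -/
def eigSpace {n : Type*} [Fintype n] (M : Matrix n n ℝ) (μ : ℝ) :
    Submodule ℝ (n → ℝ) :=
  LinearMap.ker (M.mulVecLin - μ • LinearMap.id)

/-- Eccentricity energy: sum of absolute values of the eccentricity eigenvalues. -/
def eccEnergy {V : Type*} [Fintype V] (G : SimpleGraph V) : ℝ :=
  ((eccMatrix G).charpoly.roots.map (fun x => |x|)).sum

/-- Eccentricity Wiener index: half the sum of the entries of the eccentricity matrix. -/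
def eccWiener {V : Type*} [Fintype V] (G : SimpleGraph V) : ℝ :=
  (∑ u, ∑ v, eccMatrix G u v) / 2

end

set_option linter.unusedSectionVars false
set_option maxHeartbeats 1000000

section Aux
variable {V₁ V₂ : Type*} {G₁ : SimpleGraph V₁} {G₂ : SimpleGraph V₂}



lemma adj_vv (v v' : V₁) : ¬ (subVertexJoin G₁ G₂).Adj (.inl (.inl v)) (.inl (.inl v')) := by
  simp [subVertexJoin, SimpleGraph.fromRel_adj]
lemma adj_ve (v : V₁) (e : G₁.edgeSet) :
    (subVertexJoin G₁ G₂).Adj (.inl (.inl v)) (.inl (.inr e)) ↔ v ∈ (e : Sym2 V₁) := by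
  simp [subVertexJoin, SimpleGraph.fromRel_adj]
lemma adj_vw (v : V₁) (w : V₂) :
    (subVertexJoin G₁ G₂).Adj (.inl (.inl v)) (.inr w) := by
  simp [subVertexJoin, SimpleGraph.fromRel_adj]
lemma adj_ee (e e' : G₁.edgeSet) :
    ¬ (subVertexJoin G₁ G₂).Adj (.inl (.inr e)) (.inl (.inr e')) := by
  simp [subVertexJoin, SimpleGraph.fromRel_adj]
lemma adj_ew (e : G₁.edgeSet) (w : V₂) :
    ¬ (subVertexJoin G₁ G₂).Adj (.inl (.inr e)) (.inr w) := by
  simp [subVertexJoin, SimpleGraph.fromRel_adj]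
lemma adj_wv (w : V₂) (v : V₁) :
    (subVertexJoin G₁ G₂).Adj (.inr w) (.inl (.inl v)) := (adj_vw v w).symm
lemma adj_ww (w w' : V₂) :
    (subVertexJoin G₁ G₂).Adj (.inr w) (.inr w') ↔ G₂.Adj w w' := by
  simp only [subVertexJoin, SimpleGraph.fromRel_adj]
  constructor
  · rintro ⟨_, h | h⟩
    · exact h
    · exact h.symm
  · intro h
    exact ⟨by simp [h.ne], Or.inl h⟩

lemma walk_lb2 {V : Type*} {G : SimpleGraph V} {x y : V} (p : G.Walk x y)
    (hne : x ≠ y) (hadj : ¬ G.Adj x y) : 2 ≤ p.length := by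
  cases p with
  | nil => exact absurd rfl hne
  | cons h q =>
    cases q with
    | nil => exact absurd h hadj
    | cons h' q' => simp only [SimpleGraph.Walk.length_cons]; omega

lemma walk_lb3 {V : Type*} {G : SimpleGraph V} {x y : V} (p : G.Walk x y)
    (hne : x ≠ y) (hadj : ¬ G.Adj x y)
    (hcom : ∀ z, G.Adj x z → ¬ G.Adj z y) : 3 ≤ p.length := by
  cases p with
  | nil => exact absurd rfl hne
  | cons h q =>
    cases q with
    | nil => exact absurd h hadj
    | cons h' q' =>
      cases q' with
      | nil => exact absurd h' (hcom _ h)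
      | cons h'' q'' => simp only [SimpleGraph.Walk.length_cons]; omega

lemma dist_eq_of {V : Type*} {G : SimpleGraph V} {x y : V} {n : ℕ} (p : G.Walk x y)
    (hp : p.length = n) (hlb : ∀ q : G.Walk x y, n ≤ q.length) : G.dist x y = n := by
  have h1 : G.dist x y ≤ n := hp ▸ SimpleGraph.dist_le p
  obtain ⟨q, hq⟩ := SimpleGraph.Reachable.exists_walk_length_eq_dist ⟨p⟩
  have := hlb q
  omega

lemma edge_out (e : G₁.edgeSet) : ∃ a b : V₁, G₁.Adj a b ∧ (e : Sym2 V₁) = s(a, b) := by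
  obtain ⟨e, he⟩ := e
  induction e using Sym2.ind with
  | _ a b => exact ⟨a, b, he, rfl⟩

lemma edge_mem (e : G₁.edgeSet) : ∃ a : V₁, a ∈ (e : Sym2 V₁) := by
  obtain ⟨a, b, _, h⟩ := edge_out e
  exact ⟨a, by rw [h]; simp⟩

lemma adj_to_e {x : (V₁ ⊕ G₁.edgeSet) ⊕ V₂} {e : G₁.edgeSet}
    (h : (subVertexJoin G₁ G₂).Adj x (.inl (.inr e))) :
    ∃ u, x = .inl (.inl u) ∧ u ∈ (e : Sym2 V₁) := by
  rcases x with (v | f) | w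
  · exact ⟨v, rfl, (adj_ve v e).1 h⟩
  · exact absurd h (adj_ee f e)
  · exact absurd h.symm (adj_ew e w)

lemma dist_vv (w : V₂) {v v' : V₁} (hne : v ≠ v') :
    (subVertexJoin G₁ G₂).dist (.inl (.inl v)) (.inl (.inl v')) = 2 := by
  refine dist_eq_of (SimpleGraph.Walk.cons (adj_vw v w)
    (SimpleGraph.Walk.cons (adj_vw v' w).symm SimpleGraph.Walk.nil)) (by simp) ?_
  intro q
  exact walk_lb2 q (by simp [hne]) (adj_vv v v')

lemma dist_vw (v : V₁) (w : V₂) :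
    (subVertexJoin G₁ G₂).dist (.inl (.inl v)) (.inr w) = 1 :=
  SimpleGraph.dist_eq_one_iff_adj.2 (adj_vw v w)

lemma dist_ve_mem {v : V₁} {e : G₁.edgeSet} (h : v ∈ (e : Sym2 V₁)) :
    (subVertexJoin (V₂ := V₂) G₁ G₂).dist (.inl (.inl v)) (.inl (.inr e)) = 1 :=
  SimpleGraph.dist_eq_one_iff_adj.2 ((adj_ve v e).2 h)

lemma dist_ve_not (w : V₂) {v : V₁} {e : G₁.edgeSet} (h : v ∉ (e : Sym2 V₁)) :
    (subVertexJoin G₁ G₂).dist (.inl (.inl v)) (.inl (.inr e)) = 3 := by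
  obtain ⟨u, hu⟩ := edge_mem e
  refine dist_eq_of (SimpleGraph.Walk.cons (adj_vw v w)
    (SimpleGraph.Walk.cons (adj_vw u w).symm
      (SimpleGraph.Walk.cons ((adj_ve u e).2 hu) SimpleGraph.Walk.nil))) (by simp) ?_
  intro q
  refine walk_lb3 q (by simp) (fun hadj => h ((adj_ve v e).1 hadj)) ?_
  intro z hz hze
  obtain ⟨u', rfl, _⟩ := adj_to_e hze
  exact adj_vv v u' hz

lemma dist_ew (e : G₁.edgeSet) (w : V₂) :
    (subVertexJoin G₁ G₂).dist (.inl (.inr e)) (.inr w) = 2 := by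
  obtain ⟨u, hu⟩ := edge_mem e
  refine dist_eq_of (SimpleGraph.Walk.cons ((adj_ve u e).2 hu).symm
    (SimpleGraph.Walk.cons (adj_vw u w) SimpleGraph.Walk.nil)) (by simp) ?_
  intro q
  exact walk_lb2 q (by simp) (adj_ew e w)

lemma dist_ww_adj {w w' : V₂} (h : G₂.Adj w w') :
    (subVertexJoin G₁ G₂).dist (.inr w) (.inr w') = 1 :=
  SimpleGraph.dist_eq_one_iff_adj.2 ((adj_ww w w').2 h)

lemma dist_ww_nadj (v : V₁) {w w' : V₂} (hne : w ≠ w') (h : ¬ G₂.Adj w w') :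
    (subVertexJoin G₁ G₂).dist (.inr w) (.inr w') = 2 := by
  refine dist_eq_of (SimpleGraph.Walk.cons (adj_wv w v)
    (SimpleGraph.Walk.cons (adj_vw v w') SimpleGraph.Walk.nil)) (by simp) ?_
  intro q
  exact walk_lb2 q (by simp [hne]) (fun hadj => h ((adj_ww w w').1 hadj))

lemma dist_ee_share {e e' : G₁.edgeSet} (hne : e ≠ e') {u : V₁}
    (hu : u ∈ (e : Sym2 V₁)) (hu' : u ∈ (e' : Sym2 V₁)) :
    (subVertexJoin (V₂ := V₂) G₁ G₂).dist (.inl (.inr e)) (.inl (.inr e')) = 2 := by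
  refine dist_eq_of (SimpleGraph.Walk.cons ((adj_ve u e).2 hu).symm
    (SimpleGraph.Walk.cons ((adj_ve u e').2 hu') SimpleGraph.Walk.nil)) (by simp) ?_
  intro q
  exact walk_lb2 q (by simp [hne]) (adj_ee e e')

lemma dist_ee_disj (w : V₂) {e e' : G₁.edgeSet}
    (h : ∀ u, u ∈ (e : Sym2 V₁) → u ∉ (e' : Sym2 V₁)) :
    (subVertexJoin G₁ G₂).dist (.inl (.inr e)) (.inl (.inr e')) = 4 := by
  obtain ⟨u, hu⟩ := edge_mem e
  obtain ⟨u', hu'⟩ := edge_mem e'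
  refine dist_eq_of (SimpleGraph.Walk.cons ((adj_ve u e).2 hu).symm
    (SimpleGraph.Walk.cons (adj_vw u w)
      (SimpleGraph.Walk.cons (adj_vw u' w).symm
        (SimpleGraph.Walk.cons ((adj_ve u' e').2 hu') SimpleGraph.Walk.nil)))) (by simp) ?_
  intro q
  have hne : e ≠ e' := by rintro rfl; exact h u hu hu
  cases q with
  | nil => simp_all
  | cons h1 q1 =>
    obtain ⟨a, rfl, ha⟩ := adj_to_e h1.symm
    cases q1 with
    | cons h2 q2 =>
      cases q2 with
      | nil => exact absurd ((adj_ve a e').1 h2 |> h a ha) (by simp)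
      | cons h3 q3 =>
        cases q3 with
        | nil =>
          obtain ⟨b, rfl, hb⟩ := adj_to_e h3
          exact absurd h2 (adj_vv a b)
        | cons h4 q4 => simp only [SimpleGraph.Walk.length_cons]; omega

-- ### eccentricities
variable [Fintype V₁] [Fintype V₂]

lemma ecc_w (v₀ : V₁) (e₀ : G₁.edgeSet) (w : V₂) :
    ecc (subVertexJoin G₁ G₂) (.inr w) = 2 := by
  apply le_antisymm
  · apply Finset.sup_le
    intro x _
    rcases x with (v | e) | w'
    · rw [SimpleGraph.dist_comm, dist_vw]; omega
    · rw [SimpleGraph.dist_comm, dist_ew]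
    · rcases eq_or_ne w w' with rfl | hne
      · rw [SimpleGraph.dist_self]; omega
      · by_cases hadj : G₂.Adj w w'
        · rw [dist_ww_adj hadj]; omega
        · rw [dist_ww_nadj v₀ hne hadj]
  · have h : (subVertexJoin G₁ G₂).dist (.inr w) (.inl (.inr e₀)) = 2 := by
      rw [SimpleGraph.dist_comm, dist_ew]
    calc 2 = (subVertexJoin G₁ G₂).dist (.inr w) (.inl (.inr e₀)) := h.symm
    _ ≤ _ := Finset.le_sup (Finset.mem_univ _)

lemma ecc_v (w₀ : V₂) (htwo : ∀ v u : V₁, ∃ t, G₁.Adj v t ∧ t ≠ u) (v : V₁) :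
    ecc (subVertexJoin G₁ G₂) (.inl (.inl v)) = 3 := by
  apply le_antisymm
  · apply Finset.sup_le
    intro x _
    rcases x with (v' | e) | w'
    · rcases eq_or_ne v v' with rfl | hne
      · rw [SimpleGraph.dist_self]; omega
      · rw [dist_vv w₀ hne]; omega
    · by_cases hmem : v ∈ (e : Sym2 V₁)
      · rw [dist_ve_mem hmem]; omega
      · rw [dist_ve_not w₀ hmem]
    · rw [dist_vw]; omega
  · obtain ⟨u, huv, _⟩ := htwo v v
    obtain ⟨t, hut, htv⟩ := htwo u v
    have hv : v ∉ (⟨s(u, t), hut⟩ : G₁.edgeSet).1 := by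
      simp only [Sym2.mem_iff]
      push_neg
      exact ⟨huv.ne, fun hvt => htv hvt.symm⟩
    have h := dist_ve_not (G₂ := G₂) w₀ hv
    calc 3 = _ := h.symm
    _ ≤ _ := Finset.le_sup (Finset.mem_univ _)

lemma ecc_e_le4 (w₀ : V₂) (e : G₁.edgeSet) :
    ecc (subVertexJoin G₁ G₂) (.inl (.inr e)) ≤ 4 := by
  apply Finset.sup_le
  intro x _
  rcases x with (v | e') | w'
  · by_cases hmem : v ∈ (e : Sym2 V₁)
    · rw [SimpleGraph.dist_comm, dist_ve_mem hmem]; omega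
    · rw [SimpleGraph.dist_comm, dist_ve_not w₀ hmem]; omega
  · rcases eq_or_ne e e' with rfl | hne
    · rw [SimpleGraph.dist_self]; omega
    · by_cases hsh : ∃ u, u ∈ (e : Sym2 V₁) ∧ u ∈ (e' : Sym2 V₁)
      · obtain ⟨u, hu, hu'⟩ := hsh
        rw [dist_ee_share hne hu hu']; omega
      · push_neg at hsh
        rw [dist_ee_disj w₀ hsh]
  · rw [dist_ew]; omega

lemma ecc_e_ge3 (w₀ : V₂) (htwo : ∀ v u : V₁, ∃ t, G₁.Adj v t ∧ t ≠ u) (e : G₁.edgeSet) :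
    3 ≤ ecc (subVertexJoin G₁ G₂) (.inl (.inr e)) := by
  obtain ⟨a, b, hab, he⟩ := edge_out e
  obtain ⟨t, hta, htb⟩ := htwo a b
  have ht : t ∉ (e : Sym2 V₁) := by
    rw [he]
    simp only [Sym2.mem_iff]
    push_neg
    exact ⟨hta.ne', htb⟩
  have h : (subVertexJoin G₁ G₂).dist (.inl (.inr e)) (.inl (.inl t)) = 3 := by
    rw [SimpleGraph.dist_comm, dist_ve_not w₀ ht]
  calc 3 = _ := h.symm
  _ ≤ _ := Finset.le_sup (Finset.mem_univ _)

lemma ecc_e_eq4 (w₀ : V₂) {e e' : G₁.edgeSet}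
    (hdisj : ∀ u, u ∈ (e : Sym2 V₁) → u ∉ (e' : Sym2 V₁)) :
    ecc (subVertexJoin G₁ G₂) (.inl (.inr e)) = 4 := by
  apply le_antisymm (ecc_e_le4 w₀ e)
  have h := dist_ee_disj (G₂ := G₂) w₀ hdisj
  calc 4 = _ := h.symm
  _ ≤ _ := Finset.le_sup (Finset.mem_univ _)

-- ### counting
lemma edge_eq {e : G₁.edgeSet} {a b : V₁} (hab : a ≠ b)
    (ha : a ∈ (e : Sym2 V₁)) (hb : b ∈ (e : Sym2 V₁)) : (e : Sym2 V₁) = s(a, b) := by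
  obtain ⟨x, y, hxy, hexy⟩ := edge_out e
  rw [hexy] at ha hb ⊢
  rw [Sym2.mem_iff] at ha hb
  rcases ha with rfl | rfl <;> rcases hb with rfl | rfl <;> simp_all [Sym2.eq_swap]

lemma c1 (v : V₁) :
    (Finset.univ.filter fun e : G₁.edgeSet => v ∈ (e : Sym2 V₁)).card = G₁.degree v := by
  classical
  rw [← SimpleGraph.card_incidenceFinset_eq_degree]
  refine Finset.card_bij (fun e _ => (e : Sym2 V₁)) ?_ ?_ ?_
  · intro e he
    rw [SimpleGraph.mem_incidenceFinset]
    exact ⟨e.2, (Finset.mem_filter.1 he).2⟩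
  · intro e _ e' _ h
    exact Subtype.ext h
  · intro f hf
    rw [SimpleGraph.mem_incidenceFinset] at hf
    exact ⟨⟨f, hf.1⟩, Finset.mem_filter.2 ⟨Finset.mem_univ _, hf.2⟩, rfl⟩

lemma c2 {a b : V₁} (hab : G₁.Adj a b) :
    (Finset.univ.filter fun e : G₁.edgeSet =>
      a ∈ (e : Sym2 V₁) ∧ b ∈ (e : Sym2 V₁)).card = 1 := by
  rw [Finset.card_eq_one]
  refine ⟨⟨s(a, b), hab⟩, ?_⟩
  ext e
  simp only [Finset.mem_filter, Finset.mem_univ, true_and, Finset.mem_singleton]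
  constructor
  · rintro ⟨ha, hb⟩
    exact Subtype.ext (edge_eq hab.ne ha hb)
  · rintro rfl
    constructor <;> simp

lemma cshare {r₁ : ℕ} (hd : ∀ v, G₁.degree v = r₁) (e : G₁.edgeSet) :
    (Finset.univ.filter fun e' : G₁.edgeSet =>
      ∃ u, u ∈ (e : Sym2 V₁) ∧ u ∈ (e' : Sym2 V₁)).card = 2 * r₁ - 1 := by
  obtain ⟨a, b, hab, he⟩ := edge_out e
  have hcong : (Finset.univ.filter fun e' : G₁.edgeSet =>
      ∃ u, u ∈ (e : Sym2 V₁) ∧ u ∈ (e' : Sym2 V₁)) =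
      Finset.univ.filter fun e' : G₁.edgeSet =>
      (a ∈ (e' : Sym2 V₁) ∨ b ∈ (e' : Sym2 V₁)) := by
    apply Finset.filter_congr
    intro e' _
    rw [he]
    constructor
    · rintro ⟨u, hu, hu'⟩
      rw [Sym2.mem_iff] at hu
      rcases hu with rfl | rfl
      · exact Or.inl hu'
      · exact Or.inr hu'
    · rintro (h | h)
      · exact ⟨a, by simp, h⟩
      · exact ⟨b, by simp, h⟩
  rw [hcong, Finset.filter_or]
  have hu := Finset.card_union_add_card_inter
    (Finset.univ.filter fun e' : G₁.edgeSet => a ∈ (e' : Sym2 V₁))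
    (Finset.univ.filter fun e' : G₁.edgeSet => b ∈ (e' : Sym2 V₁))
  rw [← Finset.filter_and] at hu
  rw [c1, c1, hd, hd, c2 hab] at hu
  omega

lemma c3 (w : V₂) :
    (Finset.univ.filter fun w' : V₂ => G₂.Adj w w').card = G₂.degree w := by
  classical
  rw [← SimpleGraph.card_neighborFinset_eq_degree]
  congr 1
  ext w'
  simp [SimpleGraph.mem_neighborFinset]

lemma sumIteZero {α : Type*} [Fintype α] (p : α → Prop) (f : α → ℝ) (c : ℝ)
    (h0 : ∀ x, p x → f x = 0) (hc : ∀ x, ¬ p x → f x = c) :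
    ∑ x, f x = c * ((Nat.card α : ℝ) - (Nat.card {x // p x} : ℝ)) := by
  classical
  have hf : ∀ x, f x = if p x then 0 else c := fun x => by
    by_cases hx : p x
    · rw [if_pos hx]; exact h0 x hx
    · rw [if_neg hx]; exact hc x hx
  rw [Finset.sum_congr rfl (fun x _ => hf x)]
  rw [Nat.card_eq_fintype_card, Nat.card_eq_fintype_card, Fintype.card_subtype]
  have key := Finset.card_filter_add_card_filter_not (s := (Finset.univ : Finset α)) p
  rw [Finset.sum_ite]
  simp only [Finset.sum_const_zero, Finset.sum_const, zero_add, nsmul_eq_mul]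
  have : ((Finset.univ.filter fun x => ¬ p x).card : ℝ) =
      (Fintype.card α : ℝ) - (Finset.univ.filter p).card := by
    have := key
    rw [Finset.card_univ] at this
    push_cast [← this]
    ring
  rw [this]
  ring

variable (G₁ G₂) in
lemma c1N [Fintype V₁] (v : V₁) :
    Nat.card {e : G₁.edgeSet // v ∈ (e : Sym2 V₁)} = G₁.degree v := by
  classical
  rw [Nat.card_eq_fintype_card, Fintype.card_subtype]
  exact c1 v

variable (G₁ G₂) in
lemma cshareN [Fintype V₁] {r₁ : ℕ} (hd : ∀ v, G₁.degree v = r₁) (e : G₁.edgeSet) :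
    Nat.card {e' : G₁.edgeSet // ∃ u, u ∈ (e : Sym2 V₁) ∧ u ∈ (e' : Sym2 V₁)} = 2 * r₁ - 1 := by
  classical
  rw [Nat.card_eq_fintype_card, Fintype.card_subtype]
  exact cshare hd e

variable (G₁ G₂) in
lemma cwN [Fintype V₂] {r₂ : ℕ} (hd : ∀ w, G₂.degree w = r₂) (w : V₂) :
    Nat.card {w' : V₂ // w = w' ∨ G₂.Adj w w'} = 1 + r₂ := by
  classical
  rw [Nat.card_eq_fintype_card, Fintype.card_subtype]
  have hdisj : Disjoint (Finset.univ.filter fun w' : V₂ => w = w')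
      (Finset.univ.filter fun w' : V₂ => G₂.Adj w w') := by
    rw [Finset.disjoint_left]
    rintro x hx hx'
    rw [Finset.mem_filter] at hx hx'
    rw [hx.2] at hx'
    exact G₂.irrefl hx'.2
  rw [Finset.filter_or, Finset.card_union_of_disjoint hdisj, Finset.filter_eq,
    if_pos (Finset.mem_univ w), Finset.card_singleton, c3, hd]

end Aux

/-- ε-Wiener index of the subdivision-vertex join of regular graphs:
`W_ε(G₁ ∨̇ G₂) = q₁(3p₁ - 4r₁ + 2q₁ - 1) + p₂(p₂ + 2q₁ - r₂ - 1) - (3/2)r₁p₁`. -/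
theorem stmt17 {V₁ V₂ : Type*} [Fintype V₁] [Fintype V₂]
    (G₁ : SimpleGraph V₁) (G₂ : SimpleGraph V₂) (r₁ r₂ : ℕ)
    (h₁ : G₁.Connected) (h₂ : G₂.Connected)
    (hr₁ : G₁.IsRegularOfDegree r₁) (hr₁2 : 2 ≤ r₁)
    (hr₂ : G₂.IsRegularOfDegree r₂) :
    eccWiener (subVertexJoin G₁ G₂) =
      (Fintype.card G₁.edgeSet : ℝ) *
          (3 * Fintype.card V₁ - 4 * r₁ + 2 * Fintype.card G₁.edgeSet - 1) +
        (Fintype.card V₂ : ℝ) *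
          ((Fintype.card V₂ : ℝ) + 2 * Fintype.card G₁.edgeSet - r₂ - 1) -
        3 / 2 * r₁ * Fintype.card V₁ := by

  classical
  obtain ⟨v₀⟩ := h₁.nonempty
  obtain ⟨w₀⟩ := h₂.nonempty
  have hdeg : ∀ v, G₁.degree v = r₁ := hr₁
  have hdeg₂ : ∀ w, G₂.degree w = r₂ := hr₂
  have htwo : ∀ v u : V₁, ∃ t, G₁.Adj v t ∧ t ≠ u := by
    intro v u
    have hc : 1 < (G₁.neighborFinset v).card := by
      rw [SimpleGraph.card_neighborFinset_eq_degree, hdeg]; omega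
    obtain ⟨t, ht, hne⟩ := Finset.exists_mem_ne hc u
    rw [SimpleGraph.mem_neighborFinset] at ht
    exact ⟨t, ht, hne⟩
  obtain ⟨u₀, hu₀, -⟩ := htwo v₀ v₀
  have e₀ : G₁.edgeSet := ⟨s(v₀, u₀), hu₀⟩
  set H := subVertexJoin G₁ G₂ with hH
  have hEw : ∀ w, ecc H (.inr w) = 2 := ecc_w v₀ e₀
  have hEv : ∀ v, ecc H (.inl (.inl v)) = 3 := ecc_v w₀ htwo
  have hEe3 : ∀ e, 3 ≤ ecc H (.inl (.inr e)) := ecc_e_ge3 w₀ htwo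
  have hEe4 : ∀ e, ecc H (.inl (.inr e)) ≤ 4 := ecc_e_le4 w₀
  -- entries
  have Mvv : ∀ v v', eccMatrix H (.inl (.inl v)) (.inl (.inl v')) = 0 := by
    intro v v'
    simp only [eccMatrix]
    rw [hEv, hEv]
    rcases eq_or_ne v v' with rfl | hne
    · rw [SimpleGraph.dist_self, if_neg (by omega)]
    · rw [dist_vv w₀ hne, if_neg (by omega)]
  have Mve : ∀ v e, eccMatrix H (.inl (.inl v)) (.inl (.inr e)) =
      if v ∈ (e : Sym2 V₁) then 0 else 3 := by
    intro v e
    simp only [eccMatrix]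
    rw [hEv, min_eq_left (hEe3 e)]
    by_cases hmem : v ∈ (e : Sym2 V₁)
    · rw [if_pos hmem, dist_ve_mem hmem, if_neg (by omega)]
    · rw [if_neg hmem, dist_ve_not w₀ hmem, if_pos rfl]
      norm_num
  have Mvw : ∀ v w, eccMatrix H (.inl (.inl v)) (.inr w) = 0 := by
    intro v w
    simp only [eccMatrix]
    rw [hEv, hEw, dist_vw, if_neg (by omega)]
  have Mee : ∀ e e', eccMatrix H (.inl (.inr e)) (.inl (.inr e')) =
      if ∃ u, u ∈ (e : Sym2 V₁) ∧ u ∈ (e' : Sym2 V₁) then 0 else 4 := by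
    intro e e'
    simp only [eccMatrix]
    by_cases hsh : ∃ u, u ∈ (e : Sym2 V₁) ∧ u ∈ (e' : Sym2 V₁)
    · rw [if_pos hsh]
      have h3 := hEe3 e
      have h3' := hEe3 e'
      have hmin : 3 ≤ min (ecc H (.inl (.inr e))) (ecc H (.inl (.inr e'))) :=
        le_min h3 h3'
      rcases eq_or_ne e e' with rfl | hne
      · rw [SimpleGraph.dist_self, if_neg (by omega)]
      · obtain ⟨u, hu, hu'⟩ := hsh
        rw [dist_ee_share hne hu hu', if_neg (by omega)]
    · rw [if_neg hsh]
      push_neg at hsh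
      have hsh' : ∀ u, u ∈ (e' : Sym2 V₁) → u ∉ (e : Sym2 V₁) :=
        fun u hu' hu => hsh u hu hu'
      rw [dist_ee_disj w₀ hsh, ecc_e_eq4 w₀ hsh, ecc_e_eq4 w₀ hsh', if_pos (by omega)]
      norm_num
  have Mew : ∀ e w, eccMatrix H (.inl (.inr e)) (.inr w) = 2 := by
    intro e w
    simp only [eccMatrix]
    rw [hEw, dist_ew, min_eq_right (by have := hEe3 e; omega), if_pos rfl]
    norm_num
  have Mww : ∀ w w', eccMatrix H (.inr w) (.inr w') =
      if w = w' ∨ G₂.Adj w w' then 0 else 2 := by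
    intro w w'
    simp only [eccMatrix]
    rw [hEw, hEw]
    rcases eq_or_ne w w' with rfl | hne
    · rw [SimpleGraph.dist_self, if_neg (by omega), if_pos (Or.inl rfl)]
    · by_cases hadj : G₂.Adj w w'
      · rw [dist_ww_adj hadj, if_neg (by omega), if_pos (Or.inr hadj)]
      · rw [dist_ww_nadj v₀ hne hadj, if_pos (by omega),
          if_neg (by push_neg; exact ⟨hne, hadj⟩)]
        norm_num
  have Msymm : ∀ x y, eccMatrix H x y = eccMatrix H y x := by
    intro x y
    simp only [eccMatrix]
    rw [SimpleGraph.dist_comm, min_comm]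
  -- counting facts
  have hq : (G₁.edgeFinset.card : ℕ) = Fintype.card G₁.edgeSet := SimpleGraph.edgeFinset_card
  have hHS : (Fintype.card V₁ : ℝ) * r₁ = 2 * (Fintype.card G₁.edgeSet : ℝ) := by
    have h := G₁.sum_degrees_eq_twice_card_edges
    rw [hq] at h
    have h2 : ∑ v, G₁.degree v = Fintype.card V₁ * r₁ := by
      rw [Finset.sum_congr rfl (fun v _ => hdeg v), Finset.sum_const, Finset.card_univ,
        smul_eq_mul]
    rw [h2] at h
    exact_mod_cast h
  have cv : ∀ v : V₁, Nat.card {e : G₁.edgeSet // v ∈ (e : Sym2 V₁)} = r₁ :=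
    fun v => (c1N G₁ v).trans (hdeg v)
  have ce : ∀ e : G₁.edgeSet, Nat.card {e' : G₁.edgeSet //
      ∃ u, u ∈ (e : Sym2 V₁) ∧ u ∈ (e' : Sym2 V₁)} = 2 * r₁ - 1 := cshareN G₁ hdeg
  have cw : ∀ w : V₂, Nat.card {w' : V₂ // w = w' ∨ G₂.Adj w w'} = 1 + r₂ := cwN G₂ hdeg₂
  -- block sums
  have Bvv : ∑ v, ∑ v', eccMatrix H (.inl (.inl v)) (.inl (.inl v')) = 0 := by
    simp only [Mvv, Finset.sum_const_zero]
  have Bve : ∑ v : V₁, ∑ e : G₁.edgeSet, eccMatrix H (.inl (.inl v)) (.inl (.inr e)) =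
      (Fintype.card V₁ : ℝ) * (3 * ((Fintype.card G₁.edgeSet : ℝ) - r₁)) := by
    have hrow : ∀ v : V₁, ∑ e : G₁.edgeSet, eccMatrix H (.inl (.inl v)) (.inl (.inr e)) =
        3 * ((Fintype.card G₁.edgeSet : ℝ) - r₁) := by
      intro v
      have h := sumIteZero (fun e : G₁.edgeSet => v ∈ (e : Sym2 V₁))
        (fun e => eccMatrix H (.inl (.inl v)) (.inl (.inr e))) 3
        (fun e he => (Mve v e).trans (if_pos he))
        (fun e he => (Mve v e).trans (if_neg he))
      rw [cv v, Nat.card_eq_fintype_card] at h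
      exact h
    rw [Finset.sum_congr rfl (fun v _ => hrow v), Finset.sum_const, Finset.card_univ,
      nsmul_eq_mul]
  have Bvw : ∑ v : V₁, ∑ w : V₂, eccMatrix H (.inl (.inl v)) (.inr w) = 0 := by
    simp only [Mvw, Finset.sum_const_zero]
  have Bee : ∑ e : G₁.edgeSet, ∑ e' : G₁.edgeSet,
      eccMatrix H (.inl (.inr e)) (.inl (.inr e')) =
      (Fintype.card G₁.edgeSet : ℝ) *
        (4 * ((Fintype.card G₁.edgeSet : ℝ) - (2 * r₁ - 1))) := by
    have hrow : ∀ e : G₁.edgeSet, ∑ e' : G₁.edgeSet,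
        eccMatrix H (.inl (.inr e)) (.inl (.inr e')) =
        4 * ((Fintype.card G₁.edgeSet : ℝ) - (2 * (r₁ : ℝ) - 1)) := by
      intro e
      have h := sumIteZero (fun e' : G₁.edgeSet =>
        ∃ u, u ∈ (e : Sym2 V₁) ∧ u ∈ (e' : Sym2 V₁))
        (fun e' => eccMatrix H (.inl (.inr e)) (.inl (.inr e'))) 4
        (fun e' he' => (Mee e e').trans (if_pos he'))
        (fun e' he' => (Mee e e').trans (if_neg he'))
      rw [ce e, Nat.card_eq_fintype_card] at h
      have hc : ((2 * r₁ - 1 : ℕ) : ℝ) = 2 * (r₁ : ℝ) - 1 := by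
        have h1 : 1 ≤ 2 * r₁ := by omega
        push_cast [Nat.cast_sub h1]
        ring
      rw [hc] at h
      exact h
    rw [Finset.sum_congr rfl (fun e _ => hrow e), Finset.sum_const, Finset.card_univ,
      nsmul_eq_mul]
  have Bew : ∑ e : G₁.edgeSet, ∑ w : V₂, eccMatrix H (.inl (.inr e)) (.inr w) =
      (Fintype.card G₁.edgeSet : ℝ) * ((Fintype.card V₂ : ℝ) * 2) := by
    simp only [Mew, Finset.sum_const, Finset.card_univ, nsmul_eq_mul]
  have Bww : ∑ w : V₂, ∑ w' : V₂, eccMatrix H (.inr w) (.inr w') =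
      (Fintype.card V₂ : ℝ) * (2 * ((Fintype.card V₂ : ℝ) - (1 + r₂))) := by
    have hrow : ∀ w : V₂, ∑ w' : V₂, eccMatrix H (.inr w) (.inr w') =
        2 * ((Fintype.card V₂ : ℝ) - (1 + (r₂ : ℝ))) := by
      intro w
      have h := sumIteZero (fun w' : V₂ => w = w' ∨ G₂.Adj w w')
        (fun w' => eccMatrix H (.inr w) (.inr w')) 2
        (fun w' hw' => (Mww w w').trans (if_pos hw'))
        (fun w' hw' => (Mww w w').trans (if_neg hw'))
      rw [cw w, Nat.card_eq_fintype_card] at h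
      refine h.trans ?_
      push_cast
      ring
    rw [Finset.sum_congr rfl (fun w _ => hrow w), Finset.sum_const, Finset.card_univ,
      nsmul_eq_mul]
  -- transposed blocks
  have Bev : ∑ e : G₁.edgeSet, ∑ v : V₁, eccMatrix H (.inl (.inr e)) (.inl (.inl v)) =
      (Fintype.card V₁ : ℝ) * (3 * ((Fintype.card G₁.edgeSet : ℝ) - r₁)) := by
    rw [Finset.sum_comm]
    rw [← Bve]
    exact Finset.sum_congr rfl fun v _ => Finset.sum_congr rfl fun e _ => (Msymm _ _).symm
  have Bwv : ∑ w : V₂, ∑ v : V₁, eccMatrix H (.inr w) (.inl (.inl v)) = 0 := by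
    rw [Finset.sum_comm, ← Bvw]
    exact Finset.sum_congr rfl fun v _ => Finset.sum_congr rfl fun w _ => (Msymm _ _).symm
  have Bwe : ∑ w : V₂, ∑ e : G₁.edgeSet, eccMatrix H (.inr w) (.inl (.inr e)) =
      (Fintype.card G₁.edgeSet : ℝ) * ((Fintype.card V₂ : ℝ) * 2) := by
    rw [Finset.sum_comm, ← Bew]
    exact Finset.sum_congr rfl fun e _ => Finset.sum_congr rfl fun w _ => (Msymm _ _).symm
  -- assemble
  have hsplit : ∑ u, ∑ v, eccMatrix H u v =
      (∑ v, ∑ v', eccMatrix H (.inl (.inl v)) (.inl (.inl v')) +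
        ∑ v, ∑ e, eccMatrix H (.inl (.inl v)) (.inl (.inr e)) +
        ∑ v, ∑ w, eccMatrix H (.inl (.inl v)) (.inr w)) +
      (∑ e, ∑ v, eccMatrix H (.inl (.inr e)) (.inl (.inl v)) +
        ∑ e, ∑ e', eccMatrix H (.inl (.inr e)) (.inl (.inr e')) +
        ∑ e, ∑ w, eccMatrix H (.inl (.inr e)) (.inr w)) +
      (∑ w, ∑ v, eccMatrix H (.inr w) (.inl (.inl v)) +
        ∑ w, ∑ e, eccMatrix H (.inr w) (.inl (.inr e)) +
        ∑ w, ∑ w', eccMatrix H (.inr w) (.inr w')) := by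
    rw [Fintype.sum_sum_type]
    rw [Fintype.sum_sum_type (f := fun u => ∑ v, eccMatrix H (Sum.inl u) v)]
    simp only [Fintype.sum_sum_type, Finset.sum_add_distrib]
  rw [eccWiener, hsplit, Bvv, Bve, Bvw, Bev, Bee, Bew, Bwv, Bwe, Bww]
  simp only [← Nat.card_eq_fintype_card] at hHS ⊢
  linear_combination (-(3 : ℝ)/2) * hHS
end

section
/- Let G₁ be r₁-regular (r₁ ≥ 2) with p₁ vertices and q₁ edges, and G₂ be r₂-regular with p₂ vertices. Then W_ε(G₁ ⊻ G₂) = 2p₁² + p₂² − (p₁/2)(4 − 4p₂ + 7r₁) + 3q₁(p₁ − 1) − p₂(r₂ + 1). -/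
open SimpleGraph Matrix Finset

attribute [local instance] Fintype.ofFinite Classical.propDecidable

set_option linter.unusedSectionVars false
section SEJ
variable {V₁ V₂ : Type*} [Fintype V₁] [Fintype V₂] {G₁ : SimpleGraph V₁} {G₂ : SimpleGraph V₂}

lemma sej_adj_ab {v : V₁} {e : G₁.edgeSet} :
    (subEdgeJoin G₁ G₂).Adj (.inl (.inl v)) (.inl (.inr e)) ↔ v ∈ (e : Sym2 V₁) := by
  simp [subEdgeJoin, SimpleGraph.fromRel_adj]

lemma sej_adj_bc {e : G₁.edgeSet} {c : V₂} :
    (subEdgeJoin G₁ G₂).Adj (.inl (.inr e)) (.inr c) := by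
  simp [subEdgeJoin, SimpleGraph.fromRel_adj]

lemma sej_adj_cc {c c' : V₂} :
    (subEdgeJoin G₁ G₂).Adj (.inr c) (.inr c') ↔ G₂.Adj c c' := by
  constructor
  · rintro ⟨hne, h | h⟩ <;> [exact h; exact h.symm]
  · intro h; exact ⟨by simp [h.ne], Or.inl h⟩

lemma sej_nadj_aa {v w : V₁} :
    ¬ (subEdgeJoin G₁ G₂).Adj (.inl (.inl v)) (.inl (.inl w)) := by
  simp [subEdgeJoin, SimpleGraph.fromRel_adj]

lemma sej_nadj_bb {e f : G₁.edgeSet} :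
    ¬ (subEdgeJoin G₁ G₂).Adj (.inl (.inr e)) (.inl (.inr f)) := by
  simp [subEdgeJoin, SimpleGraph.fromRel_adj]

lemma sej_nadj_ac {v : V₁} {c : V₂} :
    ¬ (subEdgeJoin G₁ G₂).Adj (.inl (.inl v)) (.inr c) := by
  simp [subEdgeJoin, SimpleGraph.fromRel_adj]

lemma sej_len_ab {v : V₁} {e : G₁.edgeSet} (hv : v ∉ (e : Sym2 V₁))
    (p : (subEdgeJoin G₁ G₂).Walk (.inl (.inl v)) (.inl (.inr e))) : 3 ≤ p.length := by
  cases p with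
  | cons h₁ q₁ =>
    rename_i x
    obtain ((u | f) | c) := x
    · exact absurd h₁ sej_nadj_aa
    · cases q₁ with
      | nil => exact absurd (sej_adj_ab.mp h₁) hv
      | cons h₂ q₂ =>
        cases q₂ with
        | nil => exact absurd h₂ sej_nadj_bb
        | cons h₃ q₃ => simp [SimpleGraph.Walk.length_cons]
    · exact absurd h₁ sej_nadj_ac

lemma sej_len_aa {v w : V₁} (hvw : v ≠ w) (hna : ¬ G₁.Adj v w)
    (p : (subEdgeJoin G₁ G₂).Walk (.inl (.inl v)) (.inl (.inl w))) : 4 ≤ p.length := by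
  cases p with
  | nil => exact absurd rfl hvw
  | cons h₁ q₁ =>
    rename_i x
    obtain ((u | e) | c) := x
    · exact absurd h₁ sej_nadj_aa
    · have hv : v ∈ (e : Sym2 V₁) := sej_adj_ab.mp h₁
      cases q₁ with
      | cons h₂ q₂ =>
        rename_i y
        obtain ((u | f) | c) := y
        · cases q₂ with
          | nil =>
            have hu : w ∈ (e : Sym2 V₁) := sej_adj_ab.mp h₂.symm
            have he : (e : Sym2 V₁) = s(v, w) := (Sym2.mem_and_mem_iff hvw).mp ⟨hv, hu⟩
            exact absurd (G₁.mem_edgeSet.mp (he ▸ e.prop)) hna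
          | cons h₃ q₃ =>
            cases q₃ with
            | nil => exact absurd h₃ sej_nadj_aa
            | cons h₄ q₄ => simp [SimpleGraph.Walk.length_cons]
        · exact absurd h₂ sej_nadj_bb
        · cases q₂ with
          | cons h₃ q₃ =>
            cases q₃ with
            | nil => exact absurd h₃.symm sej_nadj_ac
            | cons h₄ q₄ => simp [SimpleGraph.Walk.length_cons]
    · exact absurd h₁ sej_nadj_ac

end SEJ
section SEJ2
variable {V₁ V₂ : Type*} [Fintype V₁] [Fintype V₂] {G₁ : SimpleGraph V₁} {G₂ : SimpleGraph V₂}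

private lemma dist_eq_two_aux {V : Type*} {G : SimpleGraph V} {u v : V} (hne : u ≠ v)
    (hna : ¬ G.Adj u v) (p : G.Walk u v) (hp : p.length = 2) : G.dist u v = 2 := by
  have h2 : G.dist u v ≤ 2 := hp ▸ SimpleGraph.dist_le p
  have h0 : G.dist u v ≠ 0 := fun h => hne (p.reachable.dist_eq_zero_iff.mp h)
  have h1 : G.dist u v ≠ 1 := fun h => hna (SimpleGraph.dist_eq_one_iff_adj.mp h)
  omega

lemma sej_dist_ab_mem {v : V₁} {e : G₁.edgeSet} (hv : v ∈ (e : Sym2 V₁)) :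
    (subEdgeJoin G₁ G₂).dist (.inl (.inl v)) (.inl (.inr e)) = 1 :=
  SimpleGraph.dist_eq_one_iff_adj.mpr (sej_adj_ab.mpr hv)

lemma sej_dist_bc {e : G₁.edgeSet} {c : V₂} :
    (subEdgeJoin G₁ G₂).dist (.inl (.inr e)) (.inr c) = 1 :=
  SimpleGraph.dist_eq_one_iff_adj.mpr sej_adj_bc

lemma sej_dist_cc_adj {c c' : V₂} (h : G₂.Adj c c') :
    (subEdgeJoin G₁ G₂).dist (.inr c) (.inr c') = 1 :=
  SimpleGraph.dist_eq_one_iff_adj.mpr (sej_adj_cc.mpr h)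

lemma sej_dist_ac {v : V₁} {c : V₂} {e : G₁.edgeSet} (hv : v ∈ (e : Sym2 V₁)) :
    (subEdgeJoin G₁ G₂).dist (.inl (.inl v)) (.inr c) = 2 := by
  refine dist_eq_two_aux (by simp) sej_nadj_ac
    (SimpleGraph.Walk.cons (sej_adj_ab.mpr hv) (SimpleGraph.Walk.cons sej_adj_bc .nil)) ?_
  simp

lemma sej_dist_aa_adj {v w : V₁} (h : G₁.Adj v w) :
    (subEdgeJoin G₁ G₂).dist (.inl (.inl v)) (.inl (.inl w)) = 2 := by
  have he : s(v, w) ∈ G₁.edgeSet := G₁.mem_edgeSet.mpr h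
  refine dist_eq_two_aux (by simp [h.ne]) sej_nadj_aa
    (SimpleGraph.Walk.cons ((sej_adj_ab (e := ⟨_, he⟩)).mpr (by simp))
      (SimpleGraph.Walk.cons ((sej_adj_ab (e := ⟨_, he⟩) (v := w)).mpr (by simp)).symm .nil)) ?_
  simp

lemma sej_dist_bb {e f : G₁.edgeSet} (hef : e ≠ f) (c : V₂) :
    (subEdgeJoin G₁ G₂).dist (.inl (.inr e)) (.inl (.inr f)) = 2 := by
  refine dist_eq_two_aux (by simp [hef]) sej_nadj_bb
    (SimpleGraph.Walk.cons (sej_adj_bc (c := c))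
      (SimpleGraph.Walk.cons (sej_adj_bc (c := c)).symm .nil)) ?_
  simp

lemma sej_dist_cc_nadj {c c' : V₂} (hne : c ≠ c') (hna : ¬ G₂.Adj c c') (e : G₁.edgeSet) :
    (subEdgeJoin G₁ G₂).dist (.inr c) (.inr c') = 2 := by
  refine dist_eq_two_aux (by simp [hne]) (fun h => hna (sej_adj_cc.mp h))
    (SimpleGraph.Walk.cons (sej_adj_bc (e := e)).symm
      (SimpleGraph.Walk.cons (sej_adj_bc (e := e)) .nil)) ?_
  simp

lemma sej_dist_ab_nmem {v : V₁} {e e' : G₁.edgeSet} (hv : v ∉ (e : Sym2 V₁))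
    (hv' : v ∈ (e' : Sym2 V₁)) (c : V₂) :
    (subEdgeJoin G₁ G₂).dist (.inl (.inl v)) (.inl (.inr e)) = 3 := by
  have p : (subEdgeJoin G₁ G₂).Walk (.inl (.inl v)) (.inl (.inr e)) :=
    SimpleGraph.Walk.cons (sej_adj_ab.mpr hv')
      (SimpleGraph.Walk.cons (sej_adj_bc (c := c))
        (SimpleGraph.Walk.cons (sej_adj_bc (e := e)).symm .nil))
  have h3 : (subEdgeJoin G₁ G₂).dist (.inl (.inl v)) (.inl (.inr e)) ≤ 3 := by
    have := SimpleGraph.dist_le (G := subEdgeJoin G₁ G₂) (SimpleGraph.Walk.cons (sej_adj_ab.mpr hv')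
      (SimpleGraph.Walk.cons (sej_adj_bc (c := c))
        (SimpleGraph.Walk.cons (sej_adj_bc (e := e)).symm .nil)))
    simpa using this
  obtain ⟨q, hq⟩ := p.reachable.exists_walk_length_eq_dist
  have := sej_len_ab hv q
  omega

lemma sej_dist_aa_nadj {v w : V₁} (hvw : v ≠ w) (hna : ¬ G₁.Adj v w)
    {e e' : G₁.edgeSet} (hv : v ∈ (e : Sym2 V₁)) (hw : w ∈ (e' : Sym2 V₁)) (c : V₂) :
    (subEdgeJoin G₁ G₂).dist (.inl (.inl v)) (.inl (.inl w)) = 4 := by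
  have p : (subEdgeJoin G₁ G₂).Walk (.inl (.inl v)) (.inl (.inl w)) :=
    SimpleGraph.Walk.cons (sej_adj_ab.mpr hv)
      (SimpleGraph.Walk.cons (sej_adj_bc (c := c))
        (SimpleGraph.Walk.cons (sej_adj_bc (e := e')).symm
          (SimpleGraph.Walk.cons (sej_adj_ab.mpr hw).symm .nil)))
  have h4 : (subEdgeJoin G₁ G₂).dist (.inl (.inl v)) (.inl (.inl w)) ≤ 4 := by
    have := SimpleGraph.dist_le (G := subEdgeJoin G₁ G₂) (SimpleGraph.Walk.cons (sej_adj_ab.mpr hv)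
      (SimpleGraph.Walk.cons (sej_adj_bc (c := c))
        (SimpleGraph.Walk.cons (sej_adj_bc (e := e')).symm
          (SimpleGraph.Walk.cons (sej_adj_ab.mpr hw).symm .nil))))
    simpa using this
  obtain ⟨q, hq⟩ := p.reachable.exists_walk_length_eq_dist
  have := sej_len_aa hvw hna q
  omega

end SEJ2
section SEJ3
variable {V₁ V₂ : Type*} [Fintype V₁] [Fintype V₂] {G₁ : SimpleGraph V₁} {G₂ : SimpleGraph V₂}

lemma sej_ecc_c (hinc : ∀ v : V₁, ∃ e : G₁.edgeSet, v ∈ (e : Sym2 V₁))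
    (hnV1 : Nonempty V₁) (c : V₂) : ecc (subEdgeJoin G₁ G₂) (.inr c) = 2 := by
  obtain ⟨v₀⟩ := hnV1
  obtain ⟨e₀, he₀⟩ := hinc v₀
  apply le_antisymm
  · apply Finset.sup_le
    rintro ((u | e) | c') -
    · obtain ⟨e, he⟩ := hinc u
      rw [SimpleGraph.dist_comm, sej_dist_ac he]
    · rw [SimpleGraph.dist_comm, sej_dist_bc]; omega
    · by_cases hc : c = c'
      · subst hc; rw [SimpleGraph.dist_self]; omega
      · by_cases hadj : G₂.Adj c c'
        · rw [sej_dist_cc_adj hadj]; omega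
        · rw [sej_dist_cc_nadj hc hadj e₀]
  · calc (2 : ℕ) = (subEdgeJoin G₁ G₂).dist (.inr c) (.inl (.inl v₀)) := by
          rw [SimpleGraph.dist_comm, sej_dist_ac he₀]
      _ ≤ _ := Finset.le_sup (Finset.mem_univ _)

lemma sej_ecc_b (hinc : ∀ v : V₁, ∃ e : G₁.edgeSet, v ∈ (e : Sym2 V₁))
    (hnotine : ∀ e : G₁.edgeSet, ∃ v : V₁, v ∉ (e : Sym2 V₁))
    (hnV2 : Nonempty V₂) (e : G₁.edgeSet) :
    ecc (subEdgeJoin G₁ G₂) (.inl (.inr e)) = 3 := by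
  obtain ⟨c₀⟩ := hnV2
  apply le_antisymm
  · apply Finset.sup_le
    rintro ((u | f) | c') -
    · by_cases hu : u ∈ (e : Sym2 V₁)
      · rw [SimpleGraph.dist_comm, sej_dist_ab_mem hu]; omega
      · obtain ⟨e', he'⟩ := hinc u
        rw [SimpleGraph.dist_comm, sej_dist_ab_nmem hu he' c₀]
    · by_cases hef : e = f
      · subst hef; rw [SimpleGraph.dist_self]; omega
      · rw [sej_dist_bb hef c₀]; omega
    · rw [sej_dist_bc]; omega
  · obtain ⟨v, hv⟩ := hnotine e
    obtain ⟨e', he'⟩ := hinc v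
    calc (3 : ℕ) = (subEdgeJoin G₁ G₂).dist (.inl (.inr e)) (.inl (.inl v)) := by
          rw [SimpleGraph.dist_comm, sej_dist_ab_nmem hv he' c₀]
      _ ≤ _ := Finset.le_sup (Finset.mem_univ _)

lemma sej_ecc_a_le (hinc : ∀ v : V₁, ∃ e : G₁.edgeSet, v ∈ (e : Sym2 V₁))
    (hnV2 : Nonempty V₂) (v : V₁) : ecc (subEdgeJoin G₁ G₂) (.inl (.inl v)) ≤ 4 := by
  obtain ⟨c₀⟩ := hnV2
  obtain ⟨e₀, he₀⟩ := hinc v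
  apply Finset.sup_le
  rintro ((u | f) | c') -
  · by_cases huv : v = u
    · subst huv; rw [SimpleGraph.dist_self]; omega
    · by_cases hadj : G₁.Adj v u
      · rw [sej_dist_aa_adj hadj]; omega
      · obtain ⟨e', he'⟩ := hinc u
        rw [sej_dist_aa_nadj huv hadj he₀ he' c₀]
  · by_cases hv : v ∈ (f : Sym2 V₁)
    · rw [sej_dist_ab_mem hv]; omega
    · rw [sej_dist_ab_nmem hv he₀ c₀]; omega
  · rw [sej_dist_ac he₀]; omega

lemma sej_ecc_a_ge (hinc : ∀ v : V₁, ∃ e : G₁.edgeSet, v ∈ (e : Sym2 V₁))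
    (hninc : ∀ v : V₁, ∃ e : G₁.edgeSet, v ∉ (e : Sym2 V₁))
    (hnV2 : Nonempty V₂) (v : V₁) : 3 ≤ ecc (subEdgeJoin G₁ G₂) (.inl (.inl v)) := by
  obtain ⟨c₀⟩ := hnV2
  obtain ⟨e, he⟩ := hninc v
  obtain ⟨e', he'⟩ := hinc v
  calc (3 : ℕ) = (subEdgeJoin G₁ G₂).dist (.inl (.inl v)) (.inl (.inr e)) :=
        (sej_dist_ab_nmem he he' c₀).symm
    _ ≤ _ := Finset.le_sup (Finset.mem_univ _)

end SEJ3
section SEJ4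
variable {V₁ V₂ : Type*} [Fintype V₁] [Fintype V₂] {G₁ : SimpleGraph V₁} {G₂ : SimpleGraph V₂}

lemma eccMatrix_symm {V : Type*} [Fintype V] (G : SimpleGraph V) (u v : V) :
    eccMatrix G u v = eccMatrix G v u := by
  unfold eccMatrix
  rw [SimpleGraph.dist_comm, min_comm]

variable (hinc : ∀ v : V₁, ∃ e : G₁.edgeSet, v ∈ (e : Sym2 V₁))
    (hninc : ∀ v : V₁, ∃ e : G₁.edgeSet, v ∉ (e : Sym2 V₁))
    (hnotine : ∀ e : G₁.edgeSet, ∃ v : V₁, v ∉ (e : Sym2 V₁))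
    (hnV1 : Nonempty V₁) (hnV2 : Nonempty V₂)

include hinc hninc hnotine hnV1 hnV2

lemma sej_entry_aa (v w : V₁) :
    eccMatrix (subEdgeJoin G₁ G₂) (.inl (.inl v)) (.inl (.inl w)) =
      if G₁.Adj v w ∨ v = w then 0 else 4 := by
  have hgev := sej_ecc_a_ge (G₂ := G₂) hinc hninc hnV2 v
  have hgew := sej_ecc_a_ge (G₂ := G₂) hinc hninc hnV2 w
  unfold eccMatrix
  by_cases hvw : v = w
  · subst hvw
    rw [SimpleGraph.dist_self, if_neg (by omega), if_pos (Or.inr rfl)]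
  · by_cases hadj : G₁.Adj v w
    · rw [sej_dist_aa_adj hadj, if_neg (by omega), if_pos (Or.inl hadj)]
    · obtain ⟨c₀⟩ := id hnV2
      obtain ⟨e, he⟩ := hinc v
      obtain ⟨e', he'⟩ := hinc w
      have hd : (subEdgeJoin G₁ G₂).dist (.inl (.inl v)) (.inl (.inl w)) = 4 :=
        sej_dist_aa_nadj hvw hadj he he' c₀
      have hev : ecc (subEdgeJoin G₁ G₂) (.inl (.inl v)) = 4 := by
        refine le_antisymm (sej_ecc_a_le hinc hnV2 v) ?_
        calc (4:ℕ) = _ := hd.symm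
          _ ≤ _ := Finset.le_sup (Finset.mem_univ _)
      have hew : ecc (subEdgeJoin G₁ G₂) (.inl (.inl w)) = 4 := by
        refine le_antisymm (sej_ecc_a_le hinc hnV2 w) ?_
        calc (4:ℕ) = (subEdgeJoin G₁ G₂).dist (.inl (.inl w)) (.inl (.inl v)) := by
              rw [SimpleGraph.dist_comm]; exact hd.symm
          _ ≤ _ := Finset.le_sup (Finset.mem_univ _)
      rw [hd, hev, hew, if_pos (by omega), if_neg (by tauto)]
      norm_num

lemma sej_entry_ab (v : V₁) (e : G₁.edgeSet) :
    eccMatrix (subEdgeJoin G₁ G₂) (.inl (.inl v)) (.inl (.inr e)) =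
      if v ∈ (e : Sym2 V₁) then 0 else 3 := by
  have hgev := sej_ecc_a_ge (G₂ := G₂) hinc hninc hnV2 v
  have heb := sej_ecc_b (G₂ := G₂) hinc hnotine hnV2 e
  unfold eccMatrix
  rw [heb]
  by_cases hv : v ∈ (e : Sym2 V₁)
  · rw [sej_dist_ab_mem hv, if_neg (by omega), if_pos hv]
  · obtain ⟨c₀⟩ := id hnV2
    obtain ⟨e', he'⟩ := hinc v
    rw [sej_dist_ab_nmem hv he' c₀, if_pos (by omega), if_neg hv]
    norm_num

lemma sej_entry_ac (v : V₁) (c : V₂) :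
    eccMatrix (subEdgeJoin G₁ G₂) (.inl (.inl v)) (.inr c) = 2 := by
  have hgev := sej_ecc_a_ge (G₂ := G₂) hinc hninc hnV2 v
  have hec := sej_ecc_c (G₂ := G₂) hinc hnV1 c
  unfold eccMatrix
  obtain ⟨e, he⟩ := hinc v
  rw [sej_dist_ac he, hec, if_pos (by omega)]
  norm_num

lemma sej_entry_bb (e f : G₁.edgeSet) :
    eccMatrix (subEdgeJoin G₁ G₂) (.inl (.inr e)) (.inl (.inr f)) = 0 := by
  have := sej_ecc_b (G₂ := G₂) hinc hnotine hnV2 e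
  have := sej_ecc_b (G₂ := G₂) hinc hnotine hnV2 f
  unfold eccMatrix
  obtain ⟨c₀⟩ := id hnV2
  by_cases hef : e = f
  · subst hef; rw [SimpleGraph.dist_self, if_neg (by omega)]
  · rw [sej_dist_bb hef c₀, if_neg (by omega)]

lemma sej_entry_bc (e : G₁.edgeSet) (c : V₂) :
    eccMatrix (subEdgeJoin G₁ G₂) (.inl (.inr e)) (.inr c) = 0 := by
  have := sej_ecc_b (G₂ := G₂) hinc hnotine hnV2 e
  have := sej_ecc_c (G₂ := G₂) hinc hnV1 c
  unfold eccMatrix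
  rw [sej_dist_bc, if_neg (by omega)]

lemma sej_entry_cc (c c' : V₂) :
    eccMatrix (subEdgeJoin G₁ G₂) (.inr c) (.inr c') =
      if G₂.Adj c c' ∨ c = c' then 0 else 2 := by
  have := sej_ecc_c (G₂ := G₂) hinc hnV1 c
  have := sej_ecc_c (G₂ := G₂) hinc hnV1 c'
  unfold eccMatrix
  by_cases hcc : c = c'
  · subst hcc; rw [SimpleGraph.dist_self, if_neg (by omega), if_pos (Or.inr rfl)]
  · by_cases hadj : G₂.Adj c c'
    · rw [sej_dist_cc_adj hadj, if_neg (by omega), if_pos (Or.inl hadj)]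
    · obtain ⟨v₀⟩ := id hnV1
      obtain ⟨e₀, _⟩ := hinc v₀
      rw [sej_dist_cc_nadj hcc hadj e₀, if_pos (by omega), if_neg (by tauto)]
      norm_num

end SEJ4
section SEJ5
variable {V₁ V₂ : Type*} [Fintype V₁] [Fintype V₂] {G₁ : SimpleGraph V₁} {G₂ : SimpleGraph V₂}

lemma sum_sum_type' {α β M : Type*} [Fintype α] [Fintype β] [ft : Fintype (α ⊕ β)]
    [AddCommMonoid M] (f : α ⊕ β → M) :
    ∑ x, f x = (∑ a, f (Sum.inl a)) + ∑ b, f (Sum.inr b) := by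
  have h : ft = instFintypeSum α β := Subsingleton.elim _ _
  subst h
  exact Fintype.sum_sum_type f

lemma sej_card_inc (v : V₁) :
    (Finset.univ.filter (fun e : G₁.edgeSet => v ∈ (e : Sym2 V₁))).card = G₁.degree v := by
  classical
  have e1 : {e : G₁.edgeSet // v ∈ (e : Sym2 V₁)} ≃ G₁.incidenceSet v :=
    ⟨fun x => ⟨x.1.1, x.1.2, x.2⟩, fun y => ⟨⟨y.1, y.2.1⟩, y.2.2⟩, fun x => rfl, fun y => rfl⟩
  rw [← Fintype.card_subtype, Fintype.card_congr e1, SimpleGraph.card_incidenceSet_eq_degree]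

end SEJ5

theorem sej_main {V₁ V₂ : Type*} [Fintype V₁] [Fintype V₂]
    (G₁ : SimpleGraph V₁) (G₂ : SimpleGraph V₂) (r₁ r₂ : ℕ)
    (h₁ : G₁.Connected) (h₂ : G₂.Connected)
    (hr₁ : G₁.IsRegularOfDegree r₁) (hr₁2 : 2 ≤ r₁)
    (hr₂ : G₂.IsRegularOfDegree r₂) :
    eccWiener (subEdgeJoin G₁ G₂) =
      2 * (Fintype.card V₁ : ℝ) ^ 2 + (Fintype.card V₂ : ℝ) ^ 2 -
        (Fintype.card V₁ : ℝ) / 2 * (4 - 4 * Fintype.card V₂ + 7 * r₁) +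
        3 * (Fintype.card G₁.edgeSet : ℝ) * ((Fintype.card V₁ : ℝ) - 1) -
        (Fintype.card V₂ : ℝ) * (r₂ + 1) := by
  classical
  have hnV1 : Nonempty V₁ := h₁.nonempty
  have hnV2 : Nonempty V₂ := h₂.nonempty
  have hadjex : ∀ v : V₁, ∃ u, G₁.Adj v u := by
    intro v
    rw [← G₁.degree_pos_iff_exists_adj v, hr₁ v]
    omega
  have hinc : ∀ v : V₁, ∃ e : G₁.edgeSet, v ∈ (e : Sym2 V₁) := by
    intro v
    obtain ⟨u, hu⟩ := hadjex v
    exact ⟨⟨s(v, u), G₁.mem_edgeSet.mpr hu⟩, by simp⟩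
  have hninc : ∀ v : V₁, ∃ e : G₁.edgeSet, v ∉ (e : Sym2 V₁) := by
    intro v
    obtain ⟨u, hu⟩ := hadjex v
    have h2 : 1 < (G₁.neighborFinset u).card := by
      rw [G₁.card_neighborFinset_eq_degree, hr₁ u]; omega
    obtain ⟨u', hu', hne⟩ := Finset.exists_mem_ne h2 v
    have hadj' : G₁.Adj u u' := (G₁.mem_neighborFinset u u').mp hu'
    refine ⟨⟨s(u, u'), G₁.mem_edgeSet.mpr hadj'⟩, ?_⟩
    simp only [Sym2.mem_iff]
    rintro (rfl | rfl)
    · exact G₁.irrefl hu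
    · exact hne rfl
  have hr1le : r₁ + 1 ≤ Fintype.card V₁ := by
    obtain ⟨v₀⟩ := hnV1
    have := G₁.degree_lt_card_verts v₀
    rw [hr₁ v₀] at this; omega
  have hnotine : ∀ e : G₁.edgeSet, ∃ v : V₁, v ∉ (e : Sym2 V₁) := by
    intro e
    obtain ⟨⟨a, b⟩, hab⟩ := Quot.exists_rep (e : Sym2 V₁)
    by_contra hcon
    push_neg at hcon
    have hsub : (Finset.univ : Finset V₁) ⊆ {a, b} := by
      intro v _
      have hv := hcon v
      rw [← hab, show Quot.mk (Sym2.Rel V₁) (a, b) = s(a, b) from rfl, Sym2.mem_iff] at hv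
      simpa using hv
    have h1 : Fintype.card V₁ ≤ ({a, b} : Finset V₁).card := by
      rw [← Finset.card_univ]; exact Finset.card_le_card hsub
    have h2 : ({a, b} : Finset V₁).card ≤ 2 := by
      refine (Finset.card_insert_le _ _).trans ?_
      simp
    omega
  have hr2le : r₂ + 1 ≤ Fintype.card V₂ := by
    obtain ⟨c₀⟩ := hnV2
    have := G₂.degree_lt_card_verts c₀
    rw [hr₂ c₀] at this; omega
  have hincc : ∀ v : V₁, (Finset.univ.filter (fun e : G₁.edgeSet => v ∈ (e : Sym2 V₁))).card = r₁ := by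
    intro v; rw [sej_card_inc, hr₁ v]
  have hr1q : r₁ ≤ Fintype.card G₁.edgeSet := by
    obtain ⟨v₀⟩ := hnV1
    rw [← hincc v₀, ← Finset.card_univ]
    exact Finset.card_filter_le _ _
  have hhand : Fintype.card V₁ * r₁ = 2 * Fintype.card G₁.edgeSet := by
    have h := G₁.sum_degrees_eq_twice_card_edges
    have h2 : ∑ v : V₁, G₁.degree v = Fintype.card V₁ * r₁ := by
      rw [Finset.sum_congr rfl (fun v _ => hr₁ v), Finset.sum_const, Finset.card_univ,
        smul_eq_mul]
    have h3 : G₁.edgeFinset.card = Fintype.card G₁.edgeSet := by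
      rw [SimpleGraph.edgeFinset, Set.toFinset_card]
    omega
  -- row sums
  have rowAA : ∀ v : V₁, ∑ w : V₁, eccMatrix (subEdgeJoin G₁ G₂) (.inl (.inl v)) (.inl (.inl w)) =
      4 * ((Fintype.card V₁ - (r₁ + 1) : ℕ) : ℝ) := by
    intro v
    have hfc : (Finset.univ.filter (fun w => G₁.Adj v w ∨ v = w)).card = r₁ + 1 := by
      have heq : Finset.univ.filter (fun w => G₁.Adj v w ∨ v = w) =
          insert v (G₁.neighborFinset v) := by
        ext w
        simp only [Finset.mem_filter, Finset.mem_univ, true_and, Finset.mem_insert,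
          SimpleGraph.mem_neighborFinset]
        constructor
        · rintro (h | rfl) <;> tauto
        · rintro (rfl | h) <;> tauto
      rw [heq, Finset.card_insert_of_notMem (by simp), G₁.card_neighborFinset_eq_degree, hr₁ v]
    have hnc : (Finset.univ.filter (fun w => ¬(G₁.Adj v w ∨ v = w))).card =
        Fintype.card V₁ - (r₁ + 1) := by
      have h := Finset.card_filter_add_card_filter_not
        (s := (Finset.univ : Finset V₁)) (p := fun w => G₁.Adj v w ∨ v = w)
      rw [Finset.card_univ] at h
      omega
    calc ∑ w : V₁, eccMatrix (subEdgeJoin G₁ G₂) (.inl (.inl v)) (.inl (.inl w))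
        = ∑ w : V₁, (if G₁.Adj v w ∨ v = w then (0 : ℝ) else 4) :=
          Finset.sum_congr rfl (fun w _ => sej_entry_aa hinc hninc hnotine hnV1 hnV2 v w)
      _ = _ := by
          rw [Finset.sum_ite, Finset.sum_const_zero, Finset.sum_const, hnc, zero_add,
            nsmul_eq_mul]
          ring
  have rowAB : ∀ v : V₁, ∑ e : G₁.edgeSet,
      eccMatrix (subEdgeJoin G₁ G₂) (.inl (.inl v)) (.inl (.inr e)) =
      3 * ((Fintype.card G₁.edgeSet - r₁ : ℕ) : ℝ) := by
    intro v
    have hnc : (Finset.univ.filter (fun e : G₁.edgeSet => ¬ v ∈ (e : Sym2 V₁))).card =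
        Fintype.card G₁.edgeSet - r₁ := by
      have h := Finset.card_filter_add_card_filter_not
        (s := (Finset.univ : Finset G₁.edgeSet)) (p := fun e : G₁.edgeSet => v ∈ (e : Sym2 V₁))
      rw [Finset.card_univ, hincc v] at h
      omega
    calc ∑ e : G₁.edgeSet, eccMatrix (subEdgeJoin G₁ G₂) (.inl (.inl v)) (.inl (.inr e))
        = ∑ e : G₁.edgeSet, (if v ∈ (e : Sym2 V₁) then (0 : ℝ) else 3) :=
          Finset.sum_congr rfl (fun e _ => sej_entry_ab hinc hninc hnotine hnV1 hnV2 v e)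
      _ = _ := by
          rw [Finset.sum_ite, Finset.sum_const_zero, Finset.sum_const, hnc, zero_add,
            nsmul_eq_mul]
          ring
  have rowAC : ∀ v : V₁, ∑ c : V₂, eccMatrix (subEdgeJoin G₁ G₂) (.inl (.inl v)) (.inr c) =
      2 * (Fintype.card V₂ : ℝ) := by
    intro v
    rw [Finset.sum_congr rfl (fun c _ => sej_entry_ac hinc hninc hnotine hnV1 hnV2 v c),
      Finset.sum_const, Finset.card_univ, nsmul_eq_mul]
    ring
  have rowCC : ∀ c : V₂, ∑ c' : V₂, eccMatrix (subEdgeJoin G₁ G₂) (.inr c) (.inr c') =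
      2 * ((Fintype.card V₂ - (r₂ + 1) : ℕ) : ℝ) := by
    intro c
    have hfc : (Finset.univ.filter (fun c' => G₂.Adj c c' ∨ c = c')).card = r₂ + 1 := by
      have heq : Finset.univ.filter (fun c' => G₂.Adj c c' ∨ c = c') =
          insert c (G₂.neighborFinset c) := by
        ext w
        simp only [Finset.mem_filter, Finset.mem_univ, true_and, Finset.mem_insert,
          SimpleGraph.mem_neighborFinset]
        constructor
        · rintro (h | rfl) <;> tauto
        · rintro (rfl | h) <;> tauto
      rw [heq, Finset.card_insert_of_notMem (by simp), G₂.card_neighborFinset_eq_degree, hr₂ c]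
    have hnc : (Finset.univ.filter (fun c' => ¬(G₂.Adj c c' ∨ c = c'))).card =
        Fintype.card V₂ - (r₂ + 1) := by
      have h := Finset.card_filter_add_card_filter_not
        (s := (Finset.univ : Finset V₂)) (p := fun c' => G₂.Adj c c' ∨ c = c')
      rw [Finset.card_univ] at h
      omega
    calc ∑ c' : V₂, eccMatrix (subEdgeJoin G₁ G₂) (.inr c) (.inr c')
        = ∑ c' : V₂, (if G₂.Adj c c' ∨ c = c' then (0 : ℝ) else 2) :=
          Finset.sum_congr rfl (fun c' _ => sej_entry_cc hinc hninc hnotine hnV1 hnV2 c c')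
      _ = _ := by
          rw [Finset.sum_ite, Finset.sum_const_zero, Finset.sum_const, hnc, zero_add,
            nsmul_eq_mul]
          ring
  -- splitting
  have split : ∀ f : ((V₁ ⊕ G₁.edgeSet) ⊕ V₂) → ℝ,
      ∑ x, f x = ((∑ v : V₁, f (.inl (.inl v))) + ∑ e : G₁.edgeSet, f (.inl (.inr e))) +
        ∑ c : V₂, f (.inr c) := by
    intro f
    rw [sum_sum_type', sum_sum_type']
  rw [eccWiener, split]
  have hA : ∀ v : V₁, ∑ w, eccMatrix (subEdgeJoin G₁ G₂) (.inl (.inl v)) w =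
      4 * ((Fintype.card V₁ - (r₁ + 1) : ℕ) : ℝ) +
      3 * ((Fintype.card G₁.edgeSet - r₁ : ℕ) : ℝ) + 2 * (Fintype.card V₂ : ℝ) := by
    intro v
    rw [split, rowAA v, rowAB v, rowAC v]
  have hB : ∀ e : G₁.edgeSet, ∑ w, eccMatrix (subEdgeJoin G₁ G₂) (.inl (.inr e)) w =
      3 * ((Fintype.card V₁ : ℝ) - 2) := by
    intro e
    rw [split]
    have h1 : ∑ v : V₁, eccMatrix (subEdgeJoin G₁ G₂) (.inl (.inr e)) (.inl (.inl v)) =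
        3 * ((Fintype.card V₁ : ℝ) - 2) := by
      obtain ⟨⟨a, b⟩, hab⟩ := Quot.exists_rep (e : Sym2 V₁)
      have hab' : (e : Sym2 V₁) = s(a, b) := hab.symm
      have hadj : G₁.Adj a b := G₁.mem_edgeSet.mp (hab' ▸ e.prop)
      have hcard : (Finset.univ.filter (fun v : V₁ => v ∈ (e : Sym2 V₁))).card = 2 := by
        have heq : Finset.univ.filter (fun v : V₁ => v ∈ (e : Sym2 V₁)) = {a, b} := by
          ext v; simp [hab', Sym2.mem_iff]
        rw [heq, Finset.card_insert_of_notMem (by simp [hadj.ne]), Finset.card_singleton]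
      have hnc : (Finset.univ.filter (fun v : V₁ => ¬ v ∈ (e : Sym2 V₁))).card =
          Fintype.card V₁ - 2 := by
        have h := Finset.card_filter_add_card_filter_not
          (s := (Finset.univ : Finset V₁)) (p := fun v : V₁ => v ∈ (e : Sym2 V₁))
        rw [Finset.card_univ, hcard] at h
        omega
      have hent : ∀ v : V₁, eccMatrix (subEdgeJoin G₁ G₂) (.inl (.inr e)) (.inl (.inl v)) =
          if v ∈ (e : Sym2 V₁) then (0 : ℝ) else 3 := fun v => by
        rw [eccMatrix_symm]; exact sej_entry_ab hinc hninc hnotine hnV1 hnV2 v e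
      rw [Finset.sum_congr rfl (fun v _ => hent v), Finset.sum_ite, Finset.sum_const_zero,
        Finset.sum_const, hnc, zero_add, nsmul_eq_mul,
        Nat.cast_sub (by omega : 2 ≤ Fintype.card V₁)]
      ring
    have h2 : ∑ f : G₁.edgeSet, eccMatrix (subEdgeJoin G₁ G₂) (.inl (.inr e)) (.inl (.inr f)) = 0 :=
      Finset.sum_eq_zero (fun f _ => sej_entry_bb hinc hninc hnotine hnV1 hnV2 e f)
    have h3 : ∑ c : V₂, eccMatrix (subEdgeJoin G₁ G₂) (.inl (.inr e)) (.inr c) = 0 :=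
      Finset.sum_eq_zero (fun c _ => sej_entry_bc hinc hninc hnotine hnV1 hnV2 e c)
    rw [h1, h2, h3]; ring
  have hC : ∀ c : V₂, ∑ w, eccMatrix (subEdgeJoin G₁ G₂) (.inr c) w =
      2 * (Fintype.card V₁ : ℝ) + 2 * ((Fintype.card V₂ - (r₂ + 1) : ℕ) : ℝ) := by
    intro c
    rw [split]
    have h1 : ∑ v : V₁, eccMatrix (subEdgeJoin G₁ G₂) (.inr c) (.inl (.inl v)) =
        2 * (Fintype.card V₁ : ℝ) := by
      have hent : ∀ v : V₁, eccMatrix (subEdgeJoin G₁ G₂) (.inr c) (.inl (.inl v)) = (2 : ℝ) :=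
        fun v => by rw [eccMatrix_symm]; exact sej_entry_ac hinc hninc hnotine hnV1 hnV2 v c
      rw [Finset.sum_congr rfl (fun v _ => hent v), Finset.sum_const, Finset.card_univ,
        nsmul_eq_mul]
      ring
    have h2 : ∑ e : G₁.edgeSet, eccMatrix (subEdgeJoin G₁ G₂) (.inr c) (.inl (.inr e)) = 0 :=
      Finset.sum_eq_zero (fun e _ => by
        rw [eccMatrix_symm]; exact sej_entry_bc hinc hninc hnotine hnV1 hnV2 e c)
    rw [h1, h2, rowCC c]; ring
  rw [Finset.sum_congr rfl (fun v _ => hA v), Finset.sum_congr rfl (fun e _ => hB e),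
    Finset.sum_congr rfl (fun c _ => hC c)]
  rw [Finset.sum_const, Finset.sum_const, Finset.sum_const, Finset.card_univ,
    Finset.card_univ, Finset.card_univ, nsmul_eq_mul, nsmul_eq_mul, nsmul_eq_mul]
  rw [Nat.cast_sub hr1le, Nat.cast_sub hr1q, Nat.cast_sub hr2le]
  push_cast
  ring

/-- ε-Wiener index of the subdivision-edge join of regular graphs:
`W_ε(G₁ ⊻ G₂) = 2p₁² + p₂² - (p₁/2)(4 - 4p₂ + 7r₁) + 3q₁(p₁-1) - p₂(r₂+1)`. -/
theorem stmt18 {V₁ V₂ : Type*} [Fintype V₁] [Fintype V₂]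
    (G₁ : SimpleGraph V₁) (G₂ : SimpleGraph V₂) (r₁ r₂ : ℕ)
    (h₁ : G₁.Connected) (h₂ : G₂.Connected)
    (hr₁ : G₁.IsRegularOfDegree r₁) (hr₁2 : 2 ≤ r₁)
    (hr₂ : G₂.IsRegularOfDegree r₂) :
    eccWiener (subEdgeJoin G₁ G₂) =
      2 * (Fintype.card V₁ : ℝ) ^ 2 + (Fintype.card V₂ : ℝ) ^ 2 -
        (Fintype.card V₁ : ℝ) / 2 * (4 - 4 * Fintype.card V₂ + 7 * r₁) +
        3 * (Fintype.card G₁.edgeSet : ℝ) * ((Fintype.card V₁ : ℝ) - 1) -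
        (Fintype.card V₂ : ℝ) * (r₂ + 1) := by
  exact sej_main G₁ G₂ r₁ r₂ h₁ h₂ hr₁ hr₁2 hr₂
end
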